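/- Let H be a real Hilbert space and let f, g ∈ Γ0(H) be such that the Fenchel conjugates f* and g* are bounded from below. Then ‖prox_f(x)‖ = ‖prox_g(x)‖ for all x ∈ H if and only if prox_f(x) = prox_g(x) for all x ∈ H. -/

import Mathlib

open scoped InnerProductSpace
noncomputable section

variable {H : Type*} [NormedAddCommGroup H] [InnerProductSpace ℝ H] [CompleteSpace H]

/-- Convexity for extended-real-valued functions on a real Hilbert space. -/
def ERealConvexOn (f : H → EReal) : Prop :=
  ∀ x y : H, ∀ a b : ℝ, 0 ≤ a → 0 ≤ b → a + b = 1 →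
    f (a • x + b • y) ≤ (a : EReal) * f x + (b : EReal) * f y

/-- `f ∈ Γ₀(H)`: proper (never `⊥`, not identically `⊤`), convex and lower semicontinuous. -/
def Gamma0 (f : H → EReal) : Prop :=
  (∃ x, f x ≠ ⊤) ∧ (∀ x, f x ≠ ⊥) ∧ ERealConvexOn f ∧ LowerSemicontinuous f

/-- `p` is the proximal point of `f` at `x`, i.e. `p` minimizes `y ↦ f y + (1/2)‖x - y‖²`. -/
def IsProx (f : H → EReal) (x p : H) : Prop :=
  ∀ y : H, f p + (((1:ℝ)/2 * ‖x - p‖ ^ 2 : ℝ) : EReal)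
    ≤ f y + (((1:ℝ)/2 * ‖x - y‖ ^ 2 : ℝ) : EReal)

/-- The Fenchel (Legendre-Fenchel) conjugate of `f`. -/
def fenchel (f : H → EReal) (p : H) : EReal :=
  ⨆ v : H, ((⟪p, v⟫_ℝ : ℝ) : EReal) - f v

/-!
`prox_f` is the gradient of `Φ_f = ½‖·‖² - e_f`, where `e_f` is the Moreau envelope of `f`; this
function is convex and `1`-smooth, and it is bounded below because `f*` is. So it suffices to show
that a `1`-smooth convex function bounded below is determined, up to a constant, by the norm of its
gradient.

Suppose `‖∇Φ‖ ≤ ‖∇Ψ‖` and run gradient descent on `Ψ` from `x` with a small step `t`. Then `Φ` drops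
by at most `t ∑ ‖∇Ψ‖²` while `Ψ` drops by at least `t (1 - t / 2) ∑ ‖∇Ψ‖²`. The gradient norms along
the descent are antitone and square-summable, which makes `‖∇Φ‖ · ‖descent point - z‖` tend to `0`,
so the descent minimizes `Φ` too. Letting `t → 0` gives `Φ x - inf Φ ≤ Ψ x - inf Ψ`; by symmetry
`Φ - Ψ` is constant, and two `1`-smooth convex functions differing by a constant have the same
gradient.
-/

open Filter Topology Finset

theorem le_of_forall_mem_Ioc_le_add_mul {a b c : ℝ}
    (h : ∀ t ∈ Set.Ioc (0 : ℝ) 1, a ≤ b + t * c) : a ≤ b := by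
  have hlim : Tendsto (fun t => b + t * c) (𝓝[>] 0) (𝓝 b) := by
    have : Continuous fun t : ℝ => b + t * c := by fun_prop
    simpa using (this.tendsto 0).mono_left nhdsWithin_le_nhds
  exact ge_of_tendsto hlim (eventually_of_mem (Ioc_mem_nhdsGT one_pos) h)

theorem tendsto_zero_of_summable_sq {a : ℕ → ℝ} (h0 : ∀ n, 0 ≤ a n)
    (hs : Summable fun n => a n ^ 2) : Tendsto a atTop (𝓝 0) := by
  simpa [Real.sqrt_sq (h0 _)] using hs.tendsto_atTop_zero.sqrt

/-- Split the sum at `m`: the head is killed by `a n → 0`, the tail is at most `∑_{k ≥ m} a k ^ 2`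
because `a n ≤ a k`. -/
theorem tendsto_mul_sum_range_of_antitone {a : ℕ → ℝ} (h0 : ∀ n, 0 ≤ a n) (ha : Antitone a)
    (hs : Summable fun n => a n ^ 2) :
    Tendsto (fun n => a n * ∑ k ∈ range n, a k) atTop (𝓝 0) := by
  rw [Metric.tendsto_atTop]
  intro ε hε
  obtain ⟨m, hm⟩ := ((tendsto_sum_nat_add fun k => a k ^ 2).eventually
    (gt_mem_nhds (half_pos hε))).exists
  obtain ⟨N, hN⟩ := eventually_atTop.1 (((tendsto_zero_of_summable_sq h0 hs).mul_const
    (∑ k ∈ range m, a k)).eventually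
      (gt_mem_nhds (show 0 * ∑ k ∈ range m, a k < ε / 2 by simpa using half_pos hε)))
  refine ⟨max m N, fun n hn => ?_⟩
  have hmn : m ≤ n := le_of_max_le_left hn
  have htail : ∑ k ∈ Ico m n, a n * a k ≤ ∑' k, a (k + m) ^ 2 := by
    calc ∑ k ∈ Ico m n, a n * a k ≤ ∑ k ∈ Ico m n, a k ^ 2 :=
          sum_le_sum fun k hk => by
            rw [sq]; exact mul_le_mul_of_nonneg_right (ha (mem_Ico.1 hk).2.le) (h0 k)
      _ = ∑ k ∈ range (n - m), a (k + m) ^ 2 := by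
          rw [sum_Ico_eq_sum_range]; simp only [add_comm]
      _ ≤ ∑' k, a (k + m) ^ 2 :=
          ((summable_nat_add_iff m).2 hs).sum_le_tsum _ fun k _ => sq_nonneg _
  have hnn : 0 ≤ a n * ∑ k ∈ range n, a k := mul_nonneg (h0 n) (sum_nonneg fun k _ => h0 k)
  rw [Real.dist_eq, sub_zero, abs_of_nonneg hnn, ← sum_range_add_sum_Ico _ hmn, mul_add,
    mul_sum (Ico m n)]
  linarith [hN n (le_of_max_le_right hn)]

section SmoothConvex

variable {E : Type*} [NormedAddCommGroup E] [InnerProductSpace ℝ E]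

structure IsOneSmoothConvex (F : E → ℝ) (P : E → E) : Prop where
  add_inner_le : ∀ x y, F x + ⟪P x, y - x⟫_ℝ ≤ F y
  le_add_inner_add_sq : ∀ x y, F y ≤ F x + ⟪P x, y - x⟫_ℝ + 1 / 2 * ‖y - x‖ ^ 2

def gradientDescent (P : E → E) (t : ℝ) (x : E) (n : ℕ) : E :=
  (fun y => y - t • P y)^[n] x

theorem gradientDescent_zero (P : E → E) (t : ℝ) (x : E) : gradientDescent P t x 0 = x := rfl

theorem gradientDescent_succ (P : E → E) (t : ℝ) (x : E) (n : ℕ) :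
    gradientDescent P t x (n + 1) =
      gradientDescent P t x n - t • P (gradientDescent P t x n) :=
  Function.iterate_succ_apply' _ _ _

theorem norm_gradientDescent_sub_le (P : E → E) {t : ℝ} (ht : 0 ≤ t) (x : E) (n : ℕ) :
    ‖gradientDescent P t x n - x‖ ≤ t * ∑ k ∈ range n, ‖P (gradientDescent P t x k)‖ := by
  rw [← dist_eq_norm, dist_comm, mul_sum]
  refine (dist_le_range_sum_dist (gradientDescent P t x) n).trans_eq (sum_congr rfl fun k _ => ?_)
  rw [gradientDescent_succ, dist_eq_norm, sub_sub_cancel, norm_smul, Real.norm_of_nonneg ht]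

variable {F G : E → ℝ} {P Q : E → E}

namespace IsOneSmoothConvex

/-- Co-coercivity: the lower bound sharpened by the upper bound at the point `y - (P y - P x)`. -/
theorem add_inner_add_sq_le (hF : IsOneSmoothConvex F P) (x y : E) :
    F x + ⟪P x, y - x⟫_ℝ + 1 / 2 * ‖P y - P x‖ ^ 2 ≤ F y := by
  have h1 := hF.add_inner_le x (y - (P y - P x))
  have h2 := hF.le_add_inner_add_sq y (y - (P y - P x))
  rw [show y - (P y - P x) - x = (y - x) - (P y - P x) by abel, inner_sub_right] at h1
  rw [show y - (P y - P x) - y = -(P y - P x) by abel, inner_neg_right, norm_neg] at h2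
  have h3 : ⟪P y, P y - P x⟫_ℝ - ⟪P x, P y - P x⟫_ℝ = ‖P y - P x‖ ^ 2 := by
    rw [← inner_sub_left, real_inner_self_eq_norm_sq]
  linarith

theorem norm_sub_sq_le_inner (hF : IsOneSmoothConvex F P) (x y : E) :
    ‖P y - P x‖ ^ 2 ≤ ⟪P y - P x, y - x⟫_ℝ := by
  have h1 := hF.add_inner_add_sq_le x y
  have h2 := hF.add_inner_add_sq_le y x
  rw [← norm_neg (P x - P y), neg_sub, show x - y = -(y - x) by abel, inner_neg_right] at h2
  rw [inner_sub_left]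
  linarith

theorem apply_sub_smul_le (hF : IsOneSmoothConvex F P) (t : ℝ) (x : E) :
    F (x - t • P x) ≤ F x - t * (1 - t / 2) * ‖P x‖ ^ 2 := by
  have h := hF.le_add_inner_add_sq x (x - t • P x)
  rw [sub_sub_cancel_left, inner_neg_right, norm_neg, inner_smul_right,
    real_inner_self_eq_norm_sq, norm_smul, mul_pow, Real.norm_eq_abs, sq_abs] at h
  linarith

theorem norm_apply_sub_smul_le (hF : IsOneSmoothConvex F P) {t : ℝ} (ht0 : 0 < t) (ht2 : t ≤ 2)
    (x : E) : ‖P (x - t • P x)‖ ≤ ‖P x‖ := by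
  set d := P (x - t • P x) - P x
  have hfirm := hF.norm_sub_sq_le_inner x (x - t • P x)
  rw [sub_sub_cancel_left, inner_neg_right, inner_smul_right] at hfirm
  have hexp : ‖P (x - t • P x)‖ ^ 2 = ‖P x‖ ^ 2 + 2 * ⟪d, P x⟫_ℝ + ‖d‖ ^ 2 := by
    rw [← add_sub_cancel (P x) (P (x - t • P x)), norm_add_sq_real, real_inner_comm]
  refine le_of_pow_le_pow_left₀ two_ne_zero (norm_nonneg _) ?_
  nlinarith [sq_nonneg ‖d‖]

theorem antitone_norm_gradientDescent (hF : IsOneSmoothConvex F P) {t : ℝ} (ht0 : 0 < t)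
    (ht2 : t ≤ 2) (x : E) : Antitone fun n => ‖P (gradientDescent P t x n)‖ :=
  antitone_nat_of_succ_le fun n => by
    rw [gradientDescent_succ]; exact hF.norm_apply_sub_smul_le ht0 ht2 _

theorem mul_sum_sq_le (hF : IsOneSmoothConvex F P) (t : ℝ) (x : E) (n : ℕ) :
    t * (1 - t / 2) * ∑ k ∈ range n, ‖P (gradientDescent P t x k)‖ ^ 2 ≤
      F x - F (gradientDescent P t x n) := by
  have htel := sum_range_sub' (fun k => F (gradientDescent P t x k)) n
  rw [gradientDescent_zero] at htel
  rw [mul_sum, ← htel]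
  refine sum_le_sum fun k _ => ?_
  have := hF.apply_sub_smul_le t (gradientDescent P t x k)
  rw [gradientDescent_succ]
  linarith

end IsOneSmoothConvex

theorem sub_apply_gradientDescent_le (hF : ∀ x y, F x + ⟪P x, y - x⟫_ℝ ≤ F y)
    (hPQ : ∀ y, ‖P y‖ ≤ ‖Q y‖) {t : ℝ} (ht : 0 ≤ t) (x : E) (n : ℕ) :
    F x - F (gradientDescent Q t x n) ≤ t * ∑ k ∈ range n, ‖Q (gradientDescent Q t x k)‖ ^ 2 := by
  have htel := sum_range_sub' (fun k => F (gradientDescent Q t x k)) n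
  rw [gradientDescent_zero] at htel
  rw [mul_sum, ← htel]
  refine sum_le_sum fun k _ => ?_
  set y := gradientDescent Q t x k
  have hsub := hF y (y - t • Q y)
  rw [sub_sub_cancel_left, inner_neg_right, inner_smul_right] at hsub
  have hPQy : ⟪P y, Q y⟫_ℝ ≤ ‖Q y‖ ^ 2 :=
    (real_inner_le_norm _ _).trans (by nlinarith [hPQ y, norm_nonneg (P y), norm_nonneg (Q y)])
  rw [gradientDescent_succ]
  nlinarith

theorem sub_le_sub_iInf_of_norm_le (hF : ∀ x y, F x + ⟪P x, y - x⟫_ℝ ≤ F y)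
    (hG : IsOneSmoothConvex G Q) (hGb : BddBelow (Set.range G)) (hPQ : ∀ y, ‖P y‖ ≤ ‖Q y‖)
    (x z : E) : F x - F z ≤ G x - ⨅ y, G y := by
  refine le_of_forall_mem_Ioc_le_add_mul (c := (F x - F z) / 2) fun t ⟨ht0, ht1⟩ => ?_
  set u := gradientDescent Q t x
  set a := fun n => ‖Q (u n)‖
  have hc : 0 < t * (1 - t / 2) := by nlinarith
  have hG_drop : ∀ n, t * (1 - t / 2) * ∑ k ∈ range n, a k ^ 2 ≤ G x - ⨅ y, G y := fun n =>
    (hG.mul_sum_sq_le t x n).trans (by linarith [ciInf_le hGb (u n)])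
  have hsum : Summable fun n => a n ^ 2 :=
    summable_of_sum_range_le (fun n => sq_nonneg _) fun n =>
      (le_div_iff₀' hc).2 (hG_drop n)
  have hlim : Tendsto (fun n => a n * ‖x - z‖ + t * (a n * ∑ k ∈ range n, a k)) atTop (𝓝 0) := by
    have h1 := (tendsto_zero_of_summable_sq (fun n => norm_nonneg _) hsum).mul_const ‖x - z‖
    have h2 := (tendsto_mul_sum_range_of_antitone (fun n => norm_nonneg _)
      (hG.antitone_norm_gradientDescent ht0 (by linarith) x) hsum).const_mul t
    simpa using h1.add h2
  have hF_near : ∀ n, F (u n) - F z ≤ a n * ‖x - z‖ + t * (a n * ∑ k ∈ range n, a k) := by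
    intro n
    have hsub := hF (u n) z
    have hdist : ‖u n - z‖ ≤ t * ∑ k ∈ range n, a k + ‖x - z‖ := by
      linarith [norm_sub_le_norm_sub_add_norm_sub (u n) x z,
        norm_gradientDescent_sub_le Q ht0.le x n]
    have hinner : -(a n * ‖u n - z‖) ≤ ⟪P (u n), z - u n⟫_ℝ := by
      rw [← norm_neg (u n - z), neg_sub]
      have := neg_le_of_abs_le (abs_real_inner_le_norm (P (u n)) (z - u n))
      nlinarith [hPQ (u n), norm_nonneg (z - u n)]
    nlinarith [mul_le_mul_of_nonneg_left hdist (norm_nonneg (Q (u n)))]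
  have hF_drop : ∀ n, (1 - t / 2) * (F x - F (u n)) ≤ G x - ⨅ y, G y := by
    intro n
    have := sub_apply_gradientDescent_le hF hPQ ht0.le x n
    nlinarith [hG_drop n]
  have hlim' : Tendsto (fun n => (G x - ⨅ y, G y) + (1 - t / 2) *
      (a n * ‖x - z‖ + t * (a n * ∑ k ∈ range n, a k))) atTop (𝓝 (G x - ⨅ y, G y)) := by
    simpa using (hlim.const_mul (1 - t / 2)).const_add (G x - ⨅ y, G y)
  have key : (1 - t / 2) * (F x - F z) ≤ G x - ⨅ y, G y :=
    ge_of_tendsto' hlim' fun n => by nlinarith [hF_drop n, hF_near n]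
  linarith

namespace IsOneSmoothConvex

theorem sub_eq_iInf_sub_iInf_of_norm_eq (hF : IsOneSmoothConvex F P)
    (hG : IsOneSmoothConvex G Q) (hFb : BddBelow (Set.range F)) (hGb : BddBelow (Set.range G))
    (hPQ : ∀ y, ‖P y‖ = ‖Q y‖) (x : E) : F x - G x = (⨅ y, F y) - ⨅ y, G y := by
  have hFG : F x - G x + ⨅ y, G y ≤ ⨅ y, F y := le_ciInf fun z => by
    linarith [sub_le_sub_iInf_of_norm_le hF.add_inner_le hG hGb (fun y => (hPQ y).le) x z]
  have hGF : G x - F x + ⨅ y, F y ≤ ⨅ y, G y := le_ciInf fun z => by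
    linarith [sub_le_sub_iInf_of_norm_le hG.add_inner_le hF hFb (fun y => (hPQ y).ge) x z]
  linarith

theorem eq_of_sub_eq (hF : ∀ x y, F x + ⟪P x, y - x⟫_ℝ ≤ F y) (hG : IsOneSmoothConvex G Q)
    {x : E} (hFG : ∀ y, F y - G y = F x - G x) : P x = Q x := by
  set d := P x - Q x
  have hlow := hF x (x + d)
  have hup := hG.le_add_inner_add_sq x (x + d)
  rw [add_sub_cancel_left] at hlow hup
  have hd : ⟪P x, d⟫_ℝ - ⟪Q x, d⟫_ℝ = ‖d‖ ^ 2 := by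
    rw [← inner_sub_left, real_inner_self_eq_norm_sq]
  have : ‖d‖ ^ 2 ≤ 0 := by linarith [hFG (x + d)]
  exact sub_eq_zero.1 (norm_eq_zero.1 (pow_eq_zero_iff two_ne_zero |>.1
    (le_antisymm this (sq_nonneg _))))

theorem eq_of_norm_eq (hF : IsOneSmoothConvex F P) (hG : IsOneSmoothConvex G Q)
    (hFb : BddBelow (Set.range F)) (hGb : BddBelow (Set.range G)) (hPQ : ∀ y, ‖P y‖ = ‖Q y‖) :
    P = Q :=
  funext fun x => eq_of_sub_eq hF.add_inner_le hG fun y => by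
    rw [sub_eq_iInf_sub_iInf_of_norm_eq hF hG hFb hGb hPQ,
      sub_eq_iInf_sub_iInf_of_norm_eq hF hG hFb hGb hPQ]

end IsOneSmoothConvex

end SmoothConvex

section Prox

variable {E : Type*} [NormedAddCommGroup E] {f : E → EReal}

namespace IsProx

variable {x p : E}

theorem apply_ne_top (h : IsProx f x p) (hdom : ∃ y, f y ≠ ⊤) : f p ≠ ⊤ := by
  obtain ⟨y, hy⟩ := hdom
  intro hp
  have hle := h y
  rw [hp, EReal.top_add_coe, top_le_iff] at hle
  exact EReal.add_ne_top hy (EReal.coe_ne_top _) hle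

theorem toReal_add_le (h : IsProx f x p) (hbot : ∀ y, f y ≠ ⊥) (hp : f p ≠ ⊤) {y : E}
    (hy : f y ≠ ⊤) :
    (f p).toReal + 1 / 2 * ‖x - p‖ ^ 2 ≤ (f y).toReal + 1 / 2 * ‖x - y‖ ^ 2 := by
  have hle := h y
  rw [← EReal.coe_toReal hp (hbot p), ← EReal.coe_toReal hy (hbot y), ← EReal.coe_add,
    ← EReal.coe_add, EReal.coe_le_coe_iff] at hle
  exact hle

end IsProx

variable [InnerProductSpace ℝ E]

theorem ERealConvexOn.toReal_le (hf : ERealConvexOn f) (hbot : ∀ y, f y ≠ ⊥) {x y : E}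
    (hx : f x ≠ ⊤) (hy : f y ≠ ⊤) {a b : ℝ} (ha : 0 ≤ a) (hb : 0 ≤ b) (hab : a + b = 1) :
    f (a • x + b • y) ≠ ⊤ ∧ (f (a • x + b • y)).toReal ≤ a * (f x).toReal + b * (f y).toReal := by
  have h := hf x y a b ha hb hab
  rw [← EReal.coe_toReal hx (hbot x), ← EReal.coe_toReal hy (hbot y), ← EReal.coe_mul,
    ← EReal.coe_mul, ← EReal.coe_add] at h
  refine ⟨(h.trans_lt (EReal.coe_lt_top _)).ne, ?_⟩
  simpa only [EReal.toReal_coe] using EReal.toReal_le_toReal h (hbot _) (EReal.coe_ne_top _)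

namespace IsProx

variable {x p : E}

/-- `x - p` is a subgradient of `f` at `p = prox_f x`: compare `p` with the points of the segment
from `p` to `v` and let them tend to `p`. -/
theorem toReal_add_inner_le (h : IsProx f x p) (hconv : ERealConvexOn f) (hbot : ∀ y, f y ≠ ⊥)
    (hp : f p ≠ ⊤) {v : E} (hv : f v ≠ ⊤) :
    (f p).toReal + ⟪x - p, v - p⟫_ℝ ≤ (f v).toReal := by
  refine le_of_forall_mem_Ioc_le_add_mul (c := ‖v - p‖ ^ 2 / 2) fun t ⟨ht0, ht1⟩ => ?_
  obtain ⟨hm, hconv_t⟩ := hconv.toReal_le hbot hp hv (sub_nonneg.2 ht1) ht0.le (sub_add_cancel 1 t)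
  have hprox := h.toReal_add_le hbot hp hm
  have hnorm : ‖x - ((1 - t) • p + t • v)‖ ^ 2 =
      ‖x - p‖ ^ 2 - 2 * (t * ⟪x - p, v - p⟫_ℝ) + t ^ 2 * ‖v - p‖ ^ 2 := by
    rw [show x - ((1 - t) • p + t • v) = (x - p) - t • (v - p) by module, norm_sub_sq_real,
      inner_smul_right, norm_smul, mul_pow, Real.norm_eq_abs, sq_abs]
  rw [hnorm] at hprox
  nlinarith

end IsProx

/-- `½‖x‖² - e_f(x)`, where `e_f x = f (p x) + ½‖x - p x‖²` is the Moreau envelope of `f`;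
its gradient is `p = prox_f`. -/
def proxPotential (f : E → EReal) (p : E → E) (x : E) : ℝ :=
  ⟪x, p x⟫_ℝ - 1 / 2 * ‖p x‖ ^ 2 - (f (p x)).toReal

variable {p : E → E}

theorem isOneSmoothConvex_proxPotential (hdom : ∃ y, f y ≠ ⊤) (hbot : ∀ y, f y ≠ ⊥)
    (hconv : ERealConvexOn f) (hp : ∀ x, IsProx f x (p x)) :
    IsOneSmoothConvex (proxPotential f p) p where
  add_inner_le x y := by
    have hprox := (hp y).toReal_add_le hbot ((hp y).apply_ne_top hdom) ((hp x).apply_ne_top hdom)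
    simp only [proxPotential]
    rw [inner_sub_right, real_inner_comm y (p x), real_inner_comm x (p x)]
    linarith [norm_sub_sq_real y (p x), norm_sub_sq_real y (p y)]
  -- `Φ y - Φ x - ⟪p x, y - x⟫ - ½‖y - x‖²` equals
  -- `⟪x - p x, p y - p x⟫ - (f (p y) - f (p x)) - ½‖(y - p y) - (x - p x)‖²`.
  le_add_inner_add_sq x y := by
    have hsub := (hp x).toReal_add_inner_le hconv hbot ((hp x).apply_ne_top hdom)
      ((hp y).apply_ne_top hdom)
    have hw := sq_nonneg ‖(y - p y) - (x - p x)‖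
    simp only [proxPotential]
    simp only [← real_inner_self_eq_norm_sq, inner_sub_left, inner_sub_right] at hsub hw ⊢
    rw [real_inner_comm x y, real_inner_comm x (p x), real_inner_comm x (p y),
      real_inner_comm y (p x), real_inner_comm y (p y), real_inner_comm (p x) (p y)] at *
    linarith

theorem bddBelow_range_proxPotential (hdom : ∃ y, f y ≠ ⊤) (hbot : ∀ y, f y ≠ ⊥)
    (hconv : ERealConvexOn f) (hp : ∀ x, IsProx f x (p x))
    (hconj : ∃ c : ℝ, ∀ x, (c : EReal) ≤ fenchel f x) :
    BddBelow (Set.range (proxPotential f p)) := by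
  obtain ⟨c, hc⟩ := hconj
  refine ⟨c, Set.forall_mem_range.2 fun x => ?_⟩
  have hpx := (hp x).apply_ne_top hdom
  have hconj_le : fenchel f (x - p x) ≤ ((⟪x - p x, p x⟫_ℝ - (f (p x)).toReal : ℝ) : EReal) := by
    refine iSup_le fun v => ?_
    by_cases hv : f v = ⊤
    · rw [hv, EReal.sub_top]
      exact bot_le
    · have hsub := (hp x).toReal_add_inner_le hconv hbot hpx hv
      rw [inner_sub_right] at hsub
      rw [← EReal.coe_toReal hv (hbot v), ← EReal.coe_sub, EReal.coe_le_coe_iff]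
      linarith
  have hcx := EReal.coe_le_coe_iff.1 ((hc (x - p x)).trans hconj_le)
  have hpot : proxPotential f p x = ⟪x - p x, p x⟫_ℝ + 1 / 2 * ‖p x‖ ^ 2 - (f (p x)).toReal := by
    rw [proxPotential, inner_sub_left, real_inner_self_eq_norm_sq]
    ring
  rw [hpot]
  nlinarith [sq_nonneg ‖p x‖]

end Prox

/-- If `f*` and `g*` are bounded below, then the proximal operators of `f` and `g` have equal
norms everywhere if and only if they coincide everywhere. -/
theorem prox_norm_eq_iff_prox_eq
    (f g : H → EReal) (hf : Gamma0 f) (hg : Gamma0 g)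
    (hfconj : ∃ c : ℝ, ∀ x, (c : EReal) ≤ fenchel f x)
    (hgconj : ∃ c : ℝ, ∀ x, (c : EReal) ≤ fenchel g x)
    (proxf proxg : H → H)
    (hproxf : ∀ x, IsProx f x (proxf x)) (hproxg : ∀ x, IsProx g x (proxg x)) :
    (∀ x, ‖proxf x‖ = ‖proxg x‖) ↔ (∀ x, proxf x = proxg x) := by
  obtain ⟨hfdom, hfbot, hfconv, -⟩ := hf
  obtain ⟨hgdom, hgbot, hgconv, -⟩ := hg
  refine ⟨fun hnorm => congrFun ?_, fun h x => by rw [h x]⟩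
  exact (isOneSmoothConvex_proxPotential hfdom hfbot hfconv hproxf).eq_of_norm_eq
    (isOneSmoothConvex_proxPotential hgdom hgbot hgconv hproxg)
    (bddBelow_range_proxPotential hfdom hfbot hfconv hproxf hfconj)
    (bddBelow_range_proxPotential hgdom hgbot hgconv hproxg hgconj) hnorm
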